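/- Let μ be a probability measure on a measurable space, let f, g, h be measurable functions into [0,1], and let ℓ be (C,α)-Hölder and satisfy the β-lower-bound condition with constants β ≥ 1 and C_β > 0. Then ∫ ℓ(f, g) dμ ≥ C_β ( ∫ |h − g| dμ )^β − C C_β^{−α/β} ( ∫ ℓ(f, h) dμ )^{α/β}. -/

import Mathlib

open MeasureTheory

/-- The loss `ℓ` is `(C,α)`-Hölder on `[0,1]²`. -/
def IsHolderLoss (ℓ : ℝ → ℝ → ℝ) (C α : ℝ) : Prop :=
  ∀ x ∈ Set.Icc (0:ℝ) 1, ∀ y ∈ Set.Icc (0:ℝ) 1, ∀ z ∈ Set.Icc (0:ℝ) 1,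
    |ℓ x y - ℓ x z| ≤ C * |y - z| ^ α ∧ |ℓ x y - ℓ z y| ≤ C * |x - z| ^ α

/-- β-lower-bound condition on the loss: `C_β |x-y|^β ≤ ℓ(x,y)` on `[0,1]²`. -/
def LossLowerBound (ℓ : ℝ → ℝ → ℝ) (Cβ β : ℝ) : Prop :=
  ∀ x ∈ Set.Icc (0:ℝ) 1, ∀ y ∈ Set.Icc (0:ℝ) 1, Cβ * |x - y| ^ β ≤ ℓ x y

/-!
Pointwise, the Hölder bound in the first argument and the lower bound give
`ℓ(f,g) ≥ ℓ(h,g) - C|f-h|^α ≥ C_β|h-g|^β - C (ℓ(f,h)/C_β)^{α/β}`.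
Integrating, Jensen's inequality for the convex map `t ↦ t^β` and for the concave map
`t ↦ t^{α/β}` moves both powers outside the integrals. All integrands are continuous functions
of `(f,g,h)` on the compact square (a Hölder loss is continuous there), hence bounded and
measurable.
-/

open Set Filter Topology

section Jensen

variable {Ω : Type*} [MeasurableSpace Ω] {μ : Measure Ω} [IsProbabilityMeasure μ]
  {φ : Ω → ℝ} {p : ℝ}

theorem rpow_integral_le_integral_rpow (hp : 1 ≤ p) (hφ : ∀ᵐ x ∂μ, 0 ≤ φ x)
    (hφi : Integrable φ μ) (hφpi : Integrable (fun x => φ x ^ p) μ) :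
    (∫ x, φ x ∂μ) ^ p ≤ ∫ x, φ x ^ p ∂μ :=
  (convexOn_rpow hp).map_integral_le
    (Real.continuous_rpow_const (zero_le_one.trans hp)).continuousOn isClosed_Ici hφ hφi hφpi

theorem integral_rpow_le_rpow_integral (hp₀ : 0 ≤ p) (hp₁ : p ≤ 1) (hφ : ∀ᵐ x ∂μ, 0 ≤ φ x)
    (hφi : Integrable φ μ) :
    ∫ x, φ x ^ p ∂μ ≤ (∫ x, φ x ∂μ) ^ p := by
  by_cases hφpi : Integrable (fun x => φ x ^ p) μ
  · exact (Real.concaveOn_rpow hp₀ hp₁).le_map_integral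
      (Real.continuous_rpow_const hp₀).continuousOn isClosed_Ici hφ hφi hφpi
  · rw [integral_undef hφpi]
    exact Real.rpow_nonneg (integral_nonneg_of_ae hφ) p

end Jensen

theorem ContinuousOn.integrable_comp_of_isCompact {Ω E : Type*} [MeasurableSpace Ω]
    {μ : Measure Ω} [IsFiniteMeasure μ] [TopologicalSpace E] [MeasurableSpace E]
    [OpensMeasurableSpace E] {F : E → ℝ} {s : Set E} (hF : ContinuousOn F s)
    (hs : IsCompact s) {ψ : Ω → E} (hψ : Measurable ψ) (hψs : ∀ x, ψ x ∈ s) :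
    Integrable (F ∘ ψ) μ := by
  obtain ⟨M, hM⟩ := hs.exists_bound_of_continuousOn hF
  have hmeas : Measurable (F ∘ ψ) :=
    hF.domRestrict.measurable.comp (hψ.subtype_mk (h := hψs))
  exact Integrable.of_bound hmeas.aestronglyMeasurable M (ae_of_all _ fun x => hM _ (hψs x))

section Loss

variable {ℓ : ℝ → ℝ → ℝ} {C α Cβ β : ℝ}

theorem LossLowerBound.nonneg (hℓ : LossLowerBound ℓ Cβ β) (hCβ : 0 ≤ Cβ)
    {x y : ℝ} (hx : x ∈ Icc (0:ℝ) 1) (hy : y ∈ Icc (0:ℝ) 1) : 0 ≤ ℓ x y :=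
  (mul_nonneg hCβ (Real.rpow_nonneg (abs_nonneg _) _)).trans (hℓ x hx y hy)

theorem IsHolderLoss.abs_sub_le (hℓ : IsHolderLoss ℓ C α) {x y x' y' : ℝ}
    (hx : x ∈ Icc (0:ℝ) 1) (hy : y ∈ Icc (0:ℝ) 1) (hx' : x' ∈ Icc (0:ℝ) 1)
    (hy' : y' ∈ Icc (0:ℝ) 1) :
    |ℓ x y - ℓ x' y'| ≤ C * |x - x'| ^ α + C * |y - y'| ^ α :=
  calc |ℓ x y - ℓ x' y'| ≤ |ℓ x y - ℓ x' y| + |ℓ x' y - ℓ x' y'| := _root_.abs_sub_le _ _ _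
    _ ≤ C * |x - x'| ^ α + C * |y - y'| ^ α :=
      add_le_add (hℓ x hx y hy x' hx').2 (hℓ x' hx' y hy y' hy').1

theorem IsHolderLoss.continuousOn (hℓ : IsHolderLoss ℓ C α) (hα : 0 < α) :
    ContinuousOn (Function.uncurry ℓ) (Icc (0:ℝ) 1 ×ˢ Icc (0:ℝ) 1) := by
  rintro ⟨x₀, y₀⟩ ⟨hx₀, hy₀⟩
  have hbound : ∀ᶠ p in 𝓝[Icc (0:ℝ) 1 ×ˢ Icc (0:ℝ) 1] (x₀, y₀),
      dist (Function.uncurry ℓ p) (ℓ x₀ y₀) ≤ C * |p.1 - x₀| ^ α + C * |p.2 - y₀| ^ α :=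
    eventually_nhdsWithin_of_forall fun p hp => hℓ.abs_sub_le hp.1 hp.2 hx₀ hy₀
  have hlim : Tendsto (fun p : ℝ × ℝ => C * |p.1 - x₀| ^ α + C * |p.2 - y₀| ^ α)
      (𝓝 (x₀, y₀)) (𝓝 0) := by
    have hcont : Continuous (fun p : ℝ × ℝ => C * |p.1 - x₀| ^ α + C * |p.2 - y₀| ^ α) := by
      fun_prop (disch := exact hα.le)
    simpa [Real.zero_rpow hα.ne'] using hcont.tendsto (x₀, y₀)
  exact tendsto_iff_dist_tendsto_zero.2 <|
    squeeze_zero' (Eventually.of_forall fun _ => dist_nonneg) hbound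
      (hlim.mono_left nhdsWithin_le_nhds)

theorem IsHolderLoss.comparison_lower_pointwise (hℓ : IsHolderLoss ℓ C α)
    (hℓlb : LossLowerBound ℓ Cβ β) (hC : 0 ≤ C) (hα : 0 ≤ α) (hβ : 0 < β) (hCβ : 0 < Cβ)
    {x y z : ℝ} (hx : x ∈ Icc (0:ℝ) 1) (hy : y ∈ Icc (0:ℝ) 1) (hz : z ∈ Icc (0:ℝ) 1) :
    Cβ * |z - y| ^ β - C * Cβ ^ (-(α / β)) * ℓ x z ^ (α / β) ≤ ℓ x y := by
  have hholder : ℓ z y - ℓ x y ≤ C * |x - z| ^ α :=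
    (abs_sub_le_iff.1 (hℓ x hx y hy z hz).2).2
  have hlower : Cβ * |z - y| ^ β ≤ ℓ z y := hℓlb z hz y hy
  have hdist : |x - z| ^ α ≤ Cβ ^ (-(α / β)) * ℓ x z ^ (α / β) :=
    calc |x - z| ^ α = Cβ ^ (-(α / β)) * (Cβ * |x - z| ^ β) ^ (α / β) := by
          rw [Real.mul_rpow hCβ.le (by positivity), ← mul_assoc,
            ← Real.rpow_add hCβ, neg_add_cancel, Real.rpow_zero, one_mul,
            ← Real.rpow_mul (abs_nonneg _), mul_div_cancel₀ _ hβ.ne']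
      _ ≤ Cβ ^ (-(α / β)) * ℓ x z ^ (α / β) := by
          gcongr
          exact hℓlb x hx z hz
  linarith [mul_le_mul_of_nonneg_left hdist hC]

end Loss

theorem holder_risk_comparison_lower {Ω : Type*} [MeasurableSpace Ω]
    (μ : Measure Ω) [IsProbabilityMeasure μ]
    (f g h : Ω → ℝ)
    (hf : Measurable f) (hg : Measurable g) (hh : Measurable h)
    (hf01 : ∀ x, f x ∈ Set.Icc (0:ℝ) 1) (hg01 : ∀ x, g x ∈ Set.Icc (0:ℝ) 1)
    (hh01 : ∀ x, h x ∈ Set.Icc (0:ℝ) 1)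
    (ℓ : ℝ → ℝ → ℝ) (C α β Cβ : ℝ) (hC : 0 < C) (hα : α ∈ Set.Ioc (0:ℝ) 1)
    (hβ : 1 ≤ β) (hCβ : 0 < Cβ)
    (hℓ : IsHolderLoss ℓ C α) (hℓlb : LossLowerBound ℓ Cβ β) :
    Cβ * (∫ x, |h x - g x| ∂μ) ^ β
        - C * Cβ ^ (-(α / β)) * (∫ x, ℓ (f x) (h x) ∂μ) ^ (α / β) ≤
      ∫ x, ℓ (f x) (g x) ∂μ := by
  obtain ⟨hα₀, hα₁⟩ := hα
  have hβ₀ : 0 < β := by linarith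
  have hγ₀ : 0 ≤ α / β := by positivity
  have hγ₁ : α / β ≤ 1 := (div_le_one hβ₀).2 (hα₁.trans hβ)
  have hsq := (isCompact_Icc (a := (0:ℝ)) (b := 1)).prod (isCompact_Icc (a := (0:ℝ)) (b := 1))
  have hcont := hℓ.continuousOn hα₀
  have hcont_dist : Continuous fun p : ℝ × ℝ => |p.1 - p.2| := by fun_prop
  have ifg : Integrable (fun x => ℓ (f x) (g x)) μ :=
    hcont.integrable_comp_of_isCompact hsq (hf.prodMk hg) fun x => ⟨hf01 x, hg01 x⟩
  have ifh : Integrable (fun x => ℓ (f x) (h x)) μ :=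
    hcont.integrable_comp_of_isCompact hsq (hf.prodMk hh) fun x => ⟨hf01 x, hh01 x⟩
  have ifhγ : Integrable (fun x => ℓ (f x) (h x) ^ (α / β)) μ :=
    (hcont.rpow_const fun _ _ => Or.inr hγ₀).integrable_comp_of_isCompact hsq (hf.prodMk hh)
      fun x => ⟨hf01 x, hh01 x⟩
  have ihg : Integrable (fun x => |h x - g x|) μ :=
    hcont_dist.continuousOn.integrable_comp_of_isCompact hsq (hh.prodMk hg)
      fun x => ⟨hh01 x, hg01 x⟩
  have ihgβ : Integrable (fun x => |h x - g x| ^ β) μ :=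
    (hcont_dist.rpow_const fun _ => Or.inr hβ₀.le).continuousOn.integrable_comp_of_isCompact hsq
      (hh.prodMk hg) fun x => ⟨hh01 x, hg01 x⟩
  have hpointwise : ∫ x, (Cβ * |h x - g x| ^ β
      - C * Cβ ^ (-(α / β)) * ℓ (f x) (h x) ^ (α / β)) ∂μ ≤ ∫ x, ℓ (f x) (g x) ∂μ :=
    integral_mono ((ihgβ.const_mul _).sub (ifhγ.const_mul _)) ifg fun x =>
      hℓ.comparison_lower_pointwise hℓlb hC.le hα₀.le hβ₀ hCβ (hf01 x) (hg01 x) (hh01 x)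
  rw [integral_sub (ihgβ.const_mul _) (ifhγ.const_mul _), integral_const_mul,
    integral_const_mul] at hpointwise
  refine le_trans ?_ hpointwise
  gcongr
  · exact rpow_integral_le_integral_rpow hβ (ae_of_all _ fun _ => abs_nonneg _) ihg ihgβ
  · exact integral_rpow_le_rpow_integral hγ₀ hγ₁
      (ae_of_all _ fun x => hℓlb.nonneg hCβ.le (hf01 x) (hh01 x)) ifh
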